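/- Under the hypotheses of the two-parameter GPF Pólya–Szegő lemma (0 < v₁ ≤ f ≤ v₂ and 0 < w₁ ≤ g ≤ w₂ on [0,x], positive integrable), the following intermediate inequality holds: I^{α,p₁}[v₁f](x)·I^{β,p₂}[w₁g](x) + I^{α,p₁}[v₂f](x)·I^{β,p₂}[w₂g](x) ≥ I^{α,p₁}[f²](x)·I^{β,p₂}[w₁w₂](x) + I^{α,p₁}[v₁v₂](x)·I^{β,p₂}[g²](x). -/
import Mathlib


open MeasureTheory

/-- Kernel of the generalized proportional fractional (GPF) integral. -/
noncomputable def gpfKernel (α p x τ : ℝ) : ℝ :=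
  Real.exp (((p - 1) / p) * (x - τ)) * (x - τ) ^ (α - 1)

/-- Generalized proportional fractional integral
`I^{α,p}[h](x) = (1/(p^α Γ(α))) ∫₀ˣ e^{((p-1)/p)(x-τ)} (x-τ)^{α-1} h(τ) dτ`. -/
noncomputable def gpf (α p x : ℝ) (h : ℝ → ℝ) : ℝ :=
  (1 / (p ^ α * Real.Gamma α)) * ∫ τ in (0:ℝ)..x, gpfKernel α p x τ * h τ

/-- Integrability of the GPF integrand. -/
def GpfIntegrable (α p x : ℝ) (h : ℝ → ℝ) : Prop :=
  IntervalIntegrable (fun τ => gpfKernel α p x τ * h τ) volume 0 x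

lemma gpfKernel_nonneg {α p x τ : ℝ} (h : τ ≤ x) : 0 ≤ gpfKernel α p x τ :=
  mul_nonneg (Real.exp_pos _).le (Real.rpow_nonneg (by linarith) _)

theorem gpf_polya_szego_intermediate
    (α β p₁ p₂ x : ℝ) (hα : 0 < α) (hβ : 0 < β)
    (hp₁ : p₁ ∈ Set.Ioc (0:ℝ) 1) (hp₂ : p₂ ∈ Set.Ioc (0:ℝ) 1) (hx : 0 < x)
    (f g v₁ v₂ w₁ w₂ : ℝ → ℝ)
    (hfb : ∀ τ ∈ Set.Icc (0:ℝ) x, 0 < v₁ τ ∧ v₁ τ ≤ f τ ∧ f τ ≤ v₂ τ)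
    (hgb : ∀ τ ∈ Set.Icc (0:ℝ) x, 0 < w₁ τ ∧ w₁ τ ≤ g τ ∧ g τ ≤ w₂ τ)
    (h1 : GpfIntegrable α p₁ x (fun τ => v₁ τ * v₂ τ))
    (h2 : GpfIntegrable β p₂ x (fun τ => w₁ τ * w₂ τ))
    (h3 : GpfIntegrable α p₁ x (fun τ => f τ ^ 2))
    (h4 : GpfIntegrable β p₂ x (fun τ => g τ ^ 2))
    (h5 : GpfIntegrable α p₁ x (fun τ => v₁ τ * f τ))
    (h6 : GpfIntegrable β p₂ x (fun τ => w₁ τ * g τ))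
    (h7 : GpfIntegrable α p₁ x (fun τ => v₂ τ * f τ))
    (h8 : GpfIntegrable β p₂ x (fun τ => w₂ τ * g τ)) :
    gpf α p₁ x (fun τ => v₁ τ * f τ) * gpf β p₂ x (fun τ => w₁ τ * g τ) +
      gpf α p₁ x (fun τ => v₂ τ * f τ) * gpf β p₂ x (fun τ => w₂ τ * g τ) ≥
    gpf α p₁ x (fun τ => f τ ^ 2) * gpf β p₂ x (fun τ => w₁ τ * w₂ τ) +
      gpf α p₁ x (fun τ => v₁ τ * v₂ τ) * gpf β p₂ x (fun τ => g τ ^ 2) := by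
  have h5' : IntervalIntegrable (fun τ => gpfKernel α p₁ x τ * (v₁ τ * f τ)) volume 0 x := h5
  have h7' : IntervalIntegrable (fun τ => gpfKernel α p₁ x τ * (v₂ τ * f τ)) volume 0 x := h7
  have h3' : IntervalIntegrable (fun τ => gpfKernel α p₁ x τ * (f τ ^ 2)) volume 0 x := h3
  have h1' : IntervalIntegrable (fun τ => gpfKernel α p₁ x τ * (v₁ τ * v₂ τ)) volume 0 x := h1
  have h6' : IntervalIntegrable (fun σ => gpfKernel β p₂ x σ * (w₁ σ * g σ)) volume 0 x := h6
  have h8' : IntervalIntegrable (fun σ => gpfKernel β p₂ x σ * (w₂ σ * g σ)) volume 0 x := h8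
  have h4' : IntervalIntegrable (fun σ => gpfKernel β p₂ x σ * (g σ ^ 2)) volume 0 x := h4
  have h2' : IntervalIntegrable (fun σ => gpfKernel β p₂ x σ * (w₁ σ * w₂ σ)) volume 0 x := h2
  set I₁ := ∫ τ in (0:ℝ)..x, gpfKernel α p₁ x τ * (v₁ τ * f τ) with hI₁
  set I₂ := ∫ τ in (0:ℝ)..x, gpfKernel α p₁ x τ * (v₂ τ * f τ) with hI₂
  set I₃ := ∫ τ in (0:ℝ)..x, gpfKernel α p₁ x τ * (f τ ^ 2) with hI₃
  set I₄ := ∫ τ in (0:ℝ)..x, gpfKernel α p₁ x τ * (v₁ τ * v₂ τ) with hI₄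
  set J₁ := ∫ σ in (0:ℝ)..x, gpfKernel β p₂ x σ * (w₁ σ * g σ) with hJ₁
  set J₂ := ∫ σ in (0:ℝ)..x, gpfKernel β p₂ x σ * (w₂ σ * g σ) with hJ₂
  set J₃ := ∫ σ in (0:ℝ)..x, gpfKernel β p₂ x σ * (g σ ^ 2) with hJ₃
  set J₄ := ∫ σ in (0:ℝ)..x, gpfKernel β p₂ x σ * (w₁ σ * w₂ σ) with hJ₄
  -- inner inequality: for each σ in [0,x]
  have inner : ∀ σ ∈ Set.Icc (0:ℝ) x,
      0 ≤ I₁ * (w₁ σ * g σ) + I₂ * (w₂ σ * g σ) - I₃ * (w₁ σ * w₂ σ) - I₄ * (g σ ^ 2) := by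
    intro σ hσ
    obtain ⟨hw1, hw2, hw3⟩ := hgb σ hσ
    have e1 : I₁ * (w₁ σ * g σ)
        = ∫ τ in (0:ℝ)..x, (gpfKernel α p₁ x τ * (v₁ τ * f τ)) * (w₁ σ * g σ) :=
      (intervalIntegral.integral_mul_const _ _).symm
    have e2 : I₂ * (w₂ σ * g σ)
        = ∫ τ in (0:ℝ)..x, (gpfKernel α p₁ x τ * (v₂ τ * f τ)) * (w₂ σ * g σ) :=
      (intervalIntegral.integral_mul_const _ _).symm
    have e3 : I₃ * (w₁ σ * w₂ σ)
        = ∫ τ in (0:ℝ)..x, (gpfKernel α p₁ x τ * (f τ ^ 2)) * (w₁ σ * w₂ σ) :=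
      (intervalIntegral.integral_mul_const _ _).symm
    have e4 : I₄ * (g σ ^ 2)
        = ∫ τ in (0:ℝ)..x, (gpfKernel α p₁ x τ * (v₁ τ * v₂ τ)) * (g σ ^ 2) :=
      (intervalIntegral.integral_mul_const _ _).symm
    have i1 := h5'.mul_const (w₁ σ * g σ)
    have i2 := h7'.mul_const (w₂ σ * g σ)
    have i3 := h3'.mul_const (w₁ σ * w₂ σ)
    have i4 := h1'.mul_const (g σ ^ 2)
    rw [e1, e2, e3, e4, ← intervalIntegral.integral_add i1 i2,
      ← intervalIntegral.integral_sub (i1.add i2) i3,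
      ← intervalIntegral.integral_sub ((i1.add i2).sub i3) i4]
    apply intervalIntegral.integral_nonneg hx.le
    intro τ hτ
    obtain ⟨hv1, hv2, hv3⟩ := hfb τ hτ
    have hK : 0 ≤ gpfKernel α p₁ x τ := gpfKernel_nonneg hτ.2
    have key : 0 ≤ (f τ * w₂ σ - v₁ τ * g σ) * (v₂ τ * g σ - f τ * w₁ σ) := by
      apply mul_nonneg <;> nlinarith
    nlinarith [mul_nonneg hK key]
  -- outer inequality
  have outer_eq : I₁ * J₁ + I₂ * J₂ - I₃ * J₄ - I₄ * J₃
      = ∫ σ in (0:ℝ)..x,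
          ((gpfKernel β p₂ x σ * (w₁ σ * g σ)) * I₁ + (gpfKernel β p₂ x σ * (w₂ σ * g σ)) * I₂
            - (gpfKernel β p₂ x σ * (w₁ σ * w₂ σ)) * I₃
            - (gpfKernel β p₂ x σ * (g σ ^ 2)) * I₄) := by
    have j1 := h6'.mul_const I₁
    have j2 := h8'.mul_const I₂
    have j3 := h2'.mul_const I₃
    have j4 := h4'.mul_const I₄
    rw [intervalIntegral.integral_sub ((j1.add j2).sub j3) j4,
      intervalIntegral.integral_sub (j1.add j2) j3,
      intervalIntegral.integral_add j1 j2,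
      intervalIntegral.integral_mul_const, intervalIntegral.integral_mul_const,
      intervalIntegral.integral_mul_const, intervalIntegral.integral_mul_const]
    ring
  have outer : 0 ≤ I₁ * J₁ + I₂ * J₂ - I₃ * J₄ - I₄ * J₃ := by
    rw [outer_eq]
    apply intervalIntegral.integral_nonneg hx.le
    intro σ hσ
    have hK : 0 ≤ gpfKernel β p₂ x σ := gpfKernel_nonneg hσ.2
    have h := inner σ hσ
    nlinarith [mul_nonneg hK h]
  -- assemble
  have hC₁ : 0 < 1 / (p₁ ^ α * Real.Gamma α) := by
    have := Real.Gamma_pos_of_pos hα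
    have := Real.rpow_pos_of_pos hp₁.1 α
    positivity
  have hC₂ : 0 < 1 / (p₂ ^ β * Real.Gamma β) := by
    have := Real.Gamma_pos_of_pos hβ
    have := Real.rpow_pos_of_pos hp₂.1 β
    positivity
  simp only [gpf, ← hI₁, ← hI₂, ← hI₃, ← hI₄, ← hJ₁, ← hJ₂, ← hJ₃, ← hJ₄]
  nlinarith [mul_pos hC₁ hC₂, mul_nonneg (mul_pos hC₁ hC₂).le outer]
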